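/- Let O ⊆ P contain A. For any order ideal J ∈ 𝒥ₖ and any i ∈ [1,k], if j is the ⋖-maximal element with (i,j) ∈ M_O(J), then w^{O,J}(i) = r(i,j). -/

import Mathlib

open scoped Classical Pointwise

noncomputable section

/-- Position of `j` in the total order `1 ⋖ … ⋖ n ⋖ -n ⋖ … ⋖ -1` on `N`. -/
def ordKey (n : ℕ) (j : ℤ) : ℤ := if 0 < j then j else 2 * n + 1 + j

/-- Membership in the type C Gelfand–Tsetlin poset `P`:
pairs `(i,j)` with `1 ≤ i ≤ n` and `i ≤ |j| ≤ n`. -/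
def inP (n : ℕ) (p : ℤ × ℤ) : Prop :=
  1 ≤ p.1 ∧ p.1 ≤ (n : ℤ) ∧ p.1 ≤ |p.2| ∧ |p.2| ≤ (n : ℤ)

/-- The order relation `⪯` of `P`: `(i₁,j₁) ⪯ (i₂,j₂)` iff `i₁ ≤ i₂` and `j₁ ⩽̇ j₂`. -/
def ple (n : ℕ) (p q : ℤ × ℤ) : Prop :=
  p.1 ≤ q.1 ∧ ordKey n p.2 ≤ ordKey n q.2

/-- Strict version of `⪯`. -/
def plt (n : ℕ) (p q : ℤ × ℤ) : Prop := ple n p q ∧ p ≠ q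

/-- The elements of `N = {1,…,n,-n,…,-1}` listed in increasing `⋖` order. -/
def jList (n : ℕ) : List ℤ :=
  ((List.range n).map fun t => (t : ℤ) + 1) ++ ((List.range n).map fun t => (t : ℤ) - n)

/-- All pairs `(i,j)` with `i ∈ [1,n]`, `j ∈ N`, ordered first by `i` increasing,
then by `j` increasing with respect to `⋖`. -/
def posList (n : ℕ) : List (ℤ × ℤ) :=
  (List.range n).flatMap fun a => (jList n).map fun j => ((a : ℤ) + 1, j)

/-- `P` as a finite set. -/
def Pfin (n : ℕ) : Finset (ℤ × ℤ) := (posList n).toFinset.filter (inP n)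

/-- `N` as a finite set. -/
def Nfin (n : ℕ) : Finset ℤ := (jList n).toFinset

/-- The diagonal `A = {(i,i) : 1 ≤ i ≤ n}`. -/
def Aset (n : ℕ) : Finset (ℤ × ℤ) :=
  (Finset.range n).image fun t => (((t : ℤ) + 1, (t : ℤ) + 1) : ℤ × ℤ)

/-- Order ideals (downward closed subsets) of `P`. -/
def IsIdeal (n : ℕ) (J : Finset (ℤ × ℤ)) : Prop :=
  (∀ p ∈ J, inP n p) ∧ ∀ p ∈ J, ∀ q ∈ Pfin n, ple n q p → q ∈ J

/-- The set of `≺`-maximal elements of `J`. -/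
def maxPrec (n : ℕ) (J : Finset (ℤ × ℤ)) : Finset (ℤ × ℤ) :=
  J.filter fun p => ∀ q ∈ J, ple n p q → q = p

/-- `M_O(J) = (J ∩ O) ∪ max_≺(J)`. -/
def MO (n : ℕ) (O J : Finset (ℤ × ℤ)) : Finset (ℤ × ℤ) := (J ∩ O) ∪ maxPrec n J

/-- The permutation `w_M`: the product of the transpositions `s_{i,j}` over `(i,j) ∈ M`,
ordered first by `i` increasing and then by `j` increasing with respect to `⋖`
(the leftmost factor acts last). -/
def wPerm (n : ℕ) (M : Finset (ℤ × ℤ)) : Equiv.Perm ℤ :=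
  (((posList n).filter fun p => decide (p ∈ M)).map fun p => Equiv.swap p.1 p.2).prod

/-- `w^{O,J} = w_O⁻¹ ⬝ w_{M_O(J)}`. -/
def wOJ (n : ℕ) (O J : Finset (ℤ × ℤ)) : Equiv.Perm ℤ :=
  (wPerm n O)⁻¹ * wPerm n (MO n O J)

/-- The principal order ideal `⟨i,j⟩` of `(i,j) ∈ P`. -/
def princ (n : ℕ) (p : ℤ × ℤ) : Finset (ℤ × ℤ) := (Pfin n).filter fun q => ple n q p

/-- `r(i,j) = w^{O,⟨i,j⟩}(i)`. -/
def rMap (n : ℕ) (O : Finset (ℤ × ℤ)) (i j : ℤ) : ℤ := wOJ n O (princ n (i, j)) i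

/-- Inverse of `ordKey` (on the relevant range `[1, 2n]`). -/
def invOrdKey (n : ℕ) (t : ℤ) : ℤ := if t ≤ (n : ℤ) then t else t - (2 * n + 1)

/-- The `⋖`-maximal `j'` with `j' ⋖ j` and `(i,j') ∈ O`. -/
def prevO (n : ℕ) (O : Finset (ℤ × ℤ)) (i j : ℤ) : ℤ :=
  invOrdKey n (((((Nfin n).filter fun j' => (i, j') ∈ O ∧ ordKey n j' < ordKey n j).image
    (ordKey n)).max).unbotD 0)

/-- The pipe-dream linear transform `ξ` of `ℝ^P` (coordinates outside `P` are untouched):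
`ξ(ε_{i,i}) = ε_{i,r(i,i)}` and `ξ(ε_{i,j}) = ε_{i,r(i,j)} - ε_{i,r(i,j')}` for `j ≠ i`,
where `j'` is `⋖`-maximal with `j' ⋖ j` and `(i,j') ∈ O`. -/
def xiMap (n : ℕ) (O : Finset (ℤ × ℤ)) (x : (ℤ × ℤ) → ℝ) : (ℤ × ℤ) → ℝ := fun q =>
  if inP n q then
    (∑ j ∈ (Nfin n).filter (fun j => inP n (q.1, j) ∧ rMap n O q.1 j = q.2), x (q.1, j))
    - (∑ j ∈ (Nfin n).filter
        (fun j => inP n (q.1, j) ∧ j ≠ q.1 ∧ rMap n O q.1 (prevO n O q.1 j) = q.2), x (q.1, j))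
  else x q

/-- Indicator vector `1_{M_O(J)} ∈ ℝ^P`. -/
def indicMO (n : ℕ) (O J : Finset (ℤ × ℤ)) : (ℤ × ℤ) → ℝ := fun p =>
  if p ∈ MO n O J then 1 else 0

/-- The fundamental marked chain-order polytope `𝒬_O(ω_k)`:
the convex hull of the vectors `1_{M_O(J)}`, `J ∈ 𝒥ₖ`. -/
def QOfund (n : ℕ) (O : Finset (ℤ × ℤ)) (k : ℕ) : Set ((ℤ × ℤ) → ℝ) :=
  convexHull ℝ {x | ∃ J : Finset (ℤ × ℤ),
    IsIdeal n J ∧ (J ∩ Aset n).card = k ∧ x = indicMO n O J}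

/-- The marked chain-order polytope `𝒬_O(λ)` for `λ = a₁ω₁ + … + a_nω_n`:
the Minkowski sum `a₁𝒬_O(ω₁) + … + a_n𝒬_O(ω_n)`. -/
def QO (n : ℕ) (O : Finset (ℤ × ℤ)) (a : ℕ → ℕ) : Set ((ℤ × ℤ) → ℝ) :=
  ∑ k ∈ Finset.Icc 1 n, a k • QOfund n O k

/-- Integrality (lattice point) predicate. -/
def IsLat (x : (ℤ × ℤ) → ℝ) : Prop := ∀ p, ∃ m : ℤ, x p = m

/-- Type B: `λ(i) = a_i + … + a_{n-1} + a_n/2`. -/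
def lamB (n : ℕ) (a : ℕ → ℕ) (i : ℤ) : ℝ :=
  (∑ t ∈ Finset.Icc i.toNat (n - 1), (a t : ℝ)) + (a n : ℝ) / 2

/-- The type B poset polytope `𝒬^B_O(λ)` (H-description with factor `1/2`
on the coordinates in `B = {(i,-i)}`). -/
def QB (n : ℕ) (O : Finset (ℤ × ℤ)) (lam : ℤ → ℝ) : Set ((ℤ × ℤ) → ℝ) :=
  {x | (∀ i : ℤ, 1 ≤ i → i ≤ (n : ℤ) → x (i, i) = lam i) ∧
    (∀ p, inP n p → 0 ≤ x p) ∧ (∀ p, ¬ inP n p → x p = 0) ∧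
    ∀ (pq rs : ℤ × ℤ) (c : List (ℤ × ℤ)), pq ∈ O → inP n rs →
      (∀ q ∈ c, inP n q ∧ q ∉ O) →
      List.Chain' (plt n) (pq :: (c ++ [rs])) →
      (c.map x).sum ≤ x pq - (if rs.2 = -rs.1 then (1 : ℝ) / 2 else 1) * x rs}

/-- The point `x^{J,D}`. -/
def xJD (n : ℕ) (O J : Finset (ℤ × ℤ)) (D : Finset ℤ) : (ℤ × ℤ) → ℝ := fun p =>
  if p ∈ MO n O J then (if p.2 = -p.1 ∧ p.1 ∉ D then 2 else 1) else 0

/-- The projection `π : ℝ^P → ℝ^{P∖A}` (realized by zeroing the `A`-coordinates). -/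
def piA (x : (ℤ × ℤ) → ℝ) : (ℤ × ℤ) → ℝ := fun p => if p.2 = p.1 then 0 else x p

/-- The transformed type B poset polytope `Π^B_O(λ) = πξ(𝒬^B_O(λ))`. -/
def PiB (n : ℕ) (O : Finset (ℤ × ℤ)) (a : ℕ → ℕ) : Set ((ℤ × ℤ) → ℝ) :=
  (fun x => piA (xiMap n O x)) '' QB n O (lamB n a)

/-- The point `y^D ∈ ℝ^{P∖A}`. -/
def yD (D : Finset ℤ) : (ℤ × ℤ) → ℝ := fun p => if p.2 = -p.1 ∧ p.1 ∈ D then 1 else 0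

/-! Let `M = M_O(J)`. Since `(i,j) ∈ M`, the set `M_O(⟨i,j⟩)` consists of the elements of `M`
below `(i,j)`, so it suffices to compare `w_M(i)` with `w_{M'}(i)` for `M' = {q ∈ M | q ⪯ (i,j)}`.
Factor `w_M` into one product of swaps `s_{r,b}` per row `r`; the rows act in decreasing order of
`r`. Rows above `i` fix `i`, and row `i` is the same for `M` and `M'` because `j` is maximal in it.
From then on, when row `r` acts, the current value `v` satisfies `r ⋖ v ⩽̇ j`. The swaps of row `r`
that `M'` drops are the `⋖`-largest ones, so they act first and fix `v`; the remaining ones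
preserve the interval `[r, j]`. -/

open Equiv

lemma List.filter_append_filter_not_of_pairwise {α : Type*} {l : List α} {q : α → Bool}
    (h : l.Pairwise fun a b => q b → q a) : l.filter q ++ l.filter (fun a => !q a) = l := by
  induction l with
  | nil => rfl
  | cons c s ih =>
    obtain ⟨hc, hs⟩ := List.pairwise_cons.1 h
    cases hqc : q c
    · have hsq : ∀ b ∈ s, q b = false := fun b hb => by
        by_contra hb'; simpa [hqc] using hc b hb (by simpa using hb')
      rw [List.filter_cons_of_neg (by simp [hqc]), List.filter_cons_of_pos (by simp [hqc]),
        List.filter_eq_nil_iff.2 (by simpa using hsq), List.filter_eq_self.2 (by simpa using hsq)]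
      rfl
    · rw [List.filter_cons_of_pos hqc, List.filter_cons_of_neg (by simp [hqc]), List.cons_append,
        ih hs]

lemma prod_map_swap_apply_of_ne {α : Type*} [DecidableEq α] {r v : α} {l : List α}
    (hvr : v ≠ r) (hl : ∀ b ∈ l, v ≠ b) : (l.map (swap r)).prod v = v :=
  List.prod_induction (fun σ : Perm α => σ v = v)
    (fun σ τ hσ hτ => by rw [Perm.mul_apply, hτ, hσ]) rfl
    (by simpa using fun b hb => swap_apply_of_ne_of_ne hvr (hl b hb))

lemma mapsTo_prod_map_swap {α : Type*} [DecidableEq α] {S : Set α} {r : α} {l : List α}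
    (hr : r ∈ S) (hl : ∀ b ∈ l, b ∈ S) : Set.MapsTo (l.map (swap r)).prod S S :=
  List.prod_induction (fun σ : Perm α => Set.MapsTo σ S S) (fun _ _ hσ hτ => hσ.comp hτ)
    (Set.mapsTo_id S) (by
      simp only [List.mem_map, forall_exists_index, and_imp, forall_apply_eq_imp_iff₂]
      intro b hb x hx
      rw [swap_apply_def]
      split_ifs
      exacts [hl b hb, hr, hx])

lemma ordKey_of_pos {n : ℕ} {b : ℤ} (hb : 0 < b) : ordKey n b = b := if_pos hb

lemma inP.le_ordKey {n : ℕ} {p : ℤ × ℤ} (hp : inP n p) : p.1 ≤ ordKey n p.2 := by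
  obtain ⟨h1, -, h3, h4⟩ := hp
  unfold ordKey; split_ifs <;> cases abs_cases p.2 <;> omega

lemma ple_antisymm {n : ℕ} {p q : ℤ × ℤ} (hp : inP n p) (hq : inP n q)
    (hpq : ple n p q) (hqp : ple n q p) : p = q := by
  obtain ⟨h1, -, h3, h4⟩ := hp
  obtain ⟨h1', -, h3', h4'⟩ := hq
  have hkey : ordKey n p.2 = ordKey n q.2 := le_antisymm hpq.2 hqp.2
  unfold ordKey at hkey
  refine Prod.ext (le_antisymm hpq.1 hqp.1) ?_
  split_ifs at hkey <;> cases abs_cases p.2 <;> cases abs_cases q.2 <;> omega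

lemma jList_eq (n : ℕ) :
    jList n = (List.range n).map (fun t : ℕ => (t : ℤ) + 1) ++
      (List.range n).map (fun t : ℕ => (t : ℤ) - n) := by
  simp only [jList, List.pure_def, List.bind_eq_flatMap, ← List.map_eq_flatMap, List.map_map]
  rfl

lemma posList_eq (n : ℕ) :
    posList n = (List.range n).flatMap fun a : ℕ => (jList n).map fun j => ((a : ℤ) + 1, j) := by
  simp only [posList, List.pure_def, List.bind_eq_flatMap, List.flatMap_assoc,
    List.flatMap_singleton]

lemma mem_jList {n : ℕ} {b : ℤ} : b ∈ jList n ↔ b ≠ 0 ∧ |b| ≤ n := by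
  simp only [jList_eq, List.mem_append, List.mem_map, List.mem_range]
  constructor
  · rintro (⟨t, ht, rfl⟩ | ⟨t, ht, rfl⟩) <;> constructor <;> cases abs_cases ((t : ℤ) + 1) <;>
      cases abs_cases ((t : ℤ) - n) <;> omega
  · rintro ⟨hb0, hbn⟩
    rcases lt_or_gt_of_ne hb0 with hb | hb
    · exact Or.inr ⟨(b + n).toNat, by cases abs_cases b <;> omega, by cases abs_cases b <;> omega⟩
    · exact Or.inl ⟨(b - 1).toNat, by cases abs_cases b <;> omega, by omega⟩

lemma mem_Pfin {n : ℕ} {p : ℤ × ℤ} : p ∈ Pfin n ↔ inP n p := by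
  simp only [Pfin, Finset.mem_filter, List.mem_toFinset, and_iff_right_iff_imp]
  obtain ⟨r, b⟩ := p
  rintro ⟨h1, h2, h3, h4⟩
  dsimp only at h3 h4
  simp only [posList_eq, List.mem_flatMap, List.mem_map, List.mem_range, Prod.mk.injEq]
  exact ⟨(r - 1).toNat, by omega, b, mem_jList.2 ⟨by cases abs_cases b <;> omega, h4⟩,
    by omega, rfl⟩

lemma jList_pairwise_ordKey_le (n : ℕ) :
    (jList n).Pairwise fun a b => ordKey n a ≤ ordKey n b := by
  simp only [jList_eq, List.pairwise_append, List.pairwise_map, List.mem_map, List.mem_range]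
  have hrange := List.Pairwise.and_mem.1 (List.pairwise_lt_range (n := n))
  simp only [List.mem_range] at hrange
  refine ⟨hrange.imp fun h => ?_, hrange.imp fun h => ?_, ?_⟩
  · unfold ordKey; split_ifs <;> omega
  · unfold ordKey; split_ifs <;> omega
  · rintro _ ⟨t, ht, rfl⟩ _ ⟨s, hs, rfl⟩
    unfold ordKey; split_ifs <;> omega

def rowPerm (n : ℕ) (M : Finset (ℤ × ℤ)) (r : ℤ) : Perm ℤ :=
  (((jList n).filter fun b => (r, b) ∈ M).map (swap r)).prod

lemma wPerm_eq_prod_rowPerm (n : ℕ) (M : Finset (ℤ × ℤ)) :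
    wPerm n M = ((List.range n).map fun a : ℕ => rowPerm n M ((a : ℤ) + 1)).prod := by
  rw [wPerm, posList_eq, List.filter_flatMap, List.map_flatMap]
  induction List.range n with
  | nil => rfl
  | cons a l ih =>
    rw [List.flatMap_cons, List.prod_append, ih, List.map_cons, List.prod_cons, rowPerm,
      List.filter_map, List.map_map]
    rfl

section rowPerm

variable {n : ℕ} {M : Finset (ℤ × ℤ)}

lemma rowPerm_apply_of_lt (hM : ∀ p ∈ M, inP n p) {r v : ℤ} (hv : 0 ≤ v) (hvr : v < r) :
    rowPerm n M r v = v := by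
  refine prod_map_swap_apply_of_ne hvr.ne fun b hb => ?_
  obtain ⟨-, -, hrb, -⟩ := hM (r, b) (by simpa using List.of_mem_filter hb)
  dsimp only at hrb
  cases abs_cases b <;> omega

lemma mapsTo_rowPerm (hM : ∀ p ∈ M, inP n p) {r K : ℤ} (hr : 0 < r) (hrK : r ≤ K)
    (hK : ∀ b, (r, b) ∈ M → ordKey n b ≤ K) :
    Set.MapsTo (rowPerm n M r) {v | r ≤ ordKey n v ∧ ordKey n v ≤ K}
      {v | r ≤ ordKey n v ∧ ordKey n v ≤ K} := by
  refine mapsTo_prod_map_swap (by simp [ordKey_of_pos hr, hrK]) fun b hb => ?_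
  have hbM : (r, b) ∈ M := by simpa using List.of_mem_filter hb
  exact ⟨(hM _ hbM).le_ordKey, hK b hbM⟩

lemma rowPerm_eq_filter_ple_mul {r i : ℤ} (j : ℤ) (hri : r ≤ i) :
    rowPerm n M r = rowPerm n (M.filter (ple n · (i, j))) r *
      (((jList n).filter fun b => (r, b) ∈ M ∧ ordKey n j < ordKey n b).map (swap r)).prod := by
  have hsorted : ((jList n).filter fun b => (r, b) ∈ M).Pairwise
      fun a b => decide (ordKey n b ≤ ordKey n j) → decide (ordKey n a ≤ ordKey n j) :=
    ((jList_pairwise_ordKey_le n).sublist List.filter_sublist).imp fun hab hb => by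
      simp only [decide_eq_true_eq] at hb ⊢; exact hab.trans hb
  rw [rowPerm, ← List.filter_append_filter_not_of_pairwise hsorted, List.map_append,
    List.prod_append, List.filter_filter, List.filter_filter, rowPerm]
  congr 3 <;> refine List.filter_congr fun b _ => Bool.eq_iff_iff.2 ?_
  · rw [decide_eq_true_iff, Finset.mem_filter]
    simp [ple, hri, and_comm]
  · simp [and_comm]

lemma prod_rowPerm_apply_of_le (hM : ∀ p ∈ M, inP n p) {m k : ℕ} (hmk : m ≤ k) :
    ((List.range k).map fun a : ℕ => rowPerm n M ((a : ℤ) + 1)).prod m =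
      ((List.range m).map fun a : ℕ => rowPerm n M ((a : ℤ) + 1)).prod m := by
  induction k, hmk using Nat.le_induction with
  | base => rfl
  | succ k hmk ih =>
    rw [List.prod_range_succ, Perm.mul_apply,
      rowPerm_apply_of_lt hM (by positivity) (by omega), ih]

lemma prod_rowPerm_filter_ple_apply (hM : ∀ p ∈ M, inP n p) {i j : ℤ} {k : ℕ}
    (hki : (k : ℤ) ≤ i) {v : ℤ} (hkv : k < ordKey n v) (hvj : ordKey n v ≤ ordKey n j) :
    ((List.range k).map fun a : ℕ => rowPerm n (M.filter (ple n · (i, j))) ((a : ℤ) + 1)).prod v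
      =
      ((List.range k).map fun a : ℕ => rowPerm n M ((a : ℤ) + 1)).prod v := by
  induction k generalizing v with
  | zero => rfl
  | succ k ih =>
    push_cast at hki hkv
    have hrow :
        rowPerm n (M.filter (ple n · (i, j))) (k + 1) v = rowPerm n M (k + 1) v := by
      rw [rowPerm_eq_filter_ple_mul (M := M) j hki, Perm.mul_apply, prod_map_swap_apply_of_ne]
      · rintro rfl
        rw [ordKey_of_pos (by positivity)] at hkv
        exact hkv.false
      · intro b hb
        simp only [List.mem_filter, decide_eq_true_eq] at hb
        rintro rfl
        exact (hvj.trans_lt hb.2.2).false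
    have hK : ∀ b, ((k : ℤ) + 1, b) ∈ M.filter (ple n · (i, j)) → ordKey n b ≤ ordKey n j :=
      fun b hb => (Finset.mem_filter.1 hb).2.2
    have hw := mapsTo_rowPerm (fun p hp => hM p (Finset.mem_filter.1 hp).1) (by positivity)
      (by omega) hK ⟨hkv.le, hvj⟩
    rw [List.prod_range_succ, List.prod_range_succ, Perm.mul_apply, Perm.mul_apply, hrow,
      ← ih (by omega) (by rw [← hrow]; exact hw.1) (by rw [← hrow]; exact hw.2)]

end rowPerm

theorem wPerm_filter_ple_apply {n : ℕ} {M : Finset (ℤ × ℤ)} (hM : ∀ p ∈ M, inP n p) {i j : ℤ}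
    (hij : (i, j) ∈ M) (hmax : ∀ b, (i, b) ∈ M → ordKey n b ≤ ordKey n j) :
    wPerm n (M.filter (ple n · (i, j))) i = wPerm n M i := by
  have hM' : ∀ p ∈ M.filter (ple n · (i, j)), inP n p :=
    fun p hp => hM p (Finset.mem_filter.1 hp).1
  have hijP := hM _ hij
  obtain ⟨m, rfl⟩ : ∃ m : ℕ, i = (m : ℤ) + 1 := ⟨(i - 1).toNat, by have := hijP.1; omega⟩
  have hmn : m + 1 ≤ n := by have := hijP.2.1; omega
  have hrow : rowPerm n (M.filter (ple n · ((m : ℤ) + 1, j))) ((m : ℤ) + 1) =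
      rowPerm n M ((m : ℤ) + 1) := by
    rw [rowPerm_eq_filter_ple_mul (M := M) j le_rfl, List.filter_eq_nil_iff.2, List.map_nil,
      List.prod_nil, mul_one]
    simpa using fun b _ hb => hmax b hb
  have hv := mapsTo_rowPerm hM (r := (m : ℤ) + 1) (K := ordKey n j) (by positivity)
    hijP.le_ordKey hmax (x := (m : ℤ) + 1)
    (by simpa [ordKey_of_pos (by positivity : (0 : ℤ) < m + 1)] using hijP.le_ordKey)
  rw [wPerm_eq_prod_rowPerm, wPerm_eq_prod_rowPerm]
  have habove' := prod_rowPerm_apply_of_le hM' hmn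
  have habove := prod_rowPerm_apply_of_le hM hmn
  push_cast at habove' habove
  rw [habove', habove, List.prod_range_succ, List.prod_range_succ, Perm.mul_apply,
    Perm.mul_apply, hrow]
  exact prod_rowPerm_filter_ple_apply hM (by omega) (Int.lt_of_add_one_le hv.1) hv.2

lemma MO_subset (n : ℕ) (O J : Finset (ℤ × ℤ)) : MO n O J ⊆ J :=
  Finset.union_subset Finset.inter_subset_left (Finset.filter_subset _ _)

lemma MO_princ_eq_filter {n : ℕ} {O J : Finset (ℤ × ℤ)} (hJ : IsIdeal n J) {i j : ℤ}
    (hij : (i, j) ∈ MO n O J) :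
    MO n O (princ n (i, j)) = (MO n O J).filter (ple n · (i, j)) := by
  have hijJ := MO_subset n O J hij
  have hijP : (i, j) ∈ Pfin n := mem_Pfin.2 (hJ.1 _ hijJ)
  have hij_princ : (i, j) ∈ princ n (i, j) := Finset.mem_filter.2 ⟨hijP, le_rfl, le_rfl⟩
  ext q
  rw [Finset.mem_filter]
  constructor
  · intro hq
    have hqle : ple n q (i, j) := (Finset.mem_filter.1 (MO_subset _ _ _ hq)).2
    refine ⟨?_, hqle⟩
    rcases Finset.mem_union.1 hq with hq | hq
    · obtain ⟨hq_princ, hqO⟩ := Finset.mem_inter.1 hq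
      exact Finset.mem_union_left _
        (Finset.mem_inter.2 ⟨hJ.2 _ hijJ q (Finset.mem_filter.1 hq_princ).1 hqle, hqO⟩)
    · obtain rfl := (Finset.mem_filter.1 hq).2 _ hij_princ hqle
      exact hij
  · rintro ⟨hq, hqle⟩
    rcases Finset.mem_union.1 hq with hq | hq
    · obtain ⟨hqJ, hqO⟩ := Finset.mem_inter.1 hq
      exact Finset.mem_union_left _
        (Finset.mem_inter.2 ⟨Finset.mem_filter.2 ⟨mem_Pfin.2 (hJ.1 q hqJ), hqle⟩, hqO⟩)
    · obtain rfl := (Finset.mem_filter.1 hq).2 _ hijJ hqle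
      refine Finset.mem_union_right _ (Finset.mem_filter.2 ⟨hij_princ, fun q' hq' hle => ?_⟩)
      obtain ⟨hq'P, hq'le⟩ := Finset.mem_filter.1 hq'
      exact ple_antisymm (mem_Pfin.1 hq'P) (mem_Pfin.1 hijP) hq'le hle

theorem stmt2_general (n : ℕ) (O J : Finset (ℤ × ℤ))
    (hJ : IsIdeal n J)
    (i j : ℤ)
    (hmem : ((i, j) : ℤ × ℤ) ∈ MO n O J)
    (hmax : ∀ j' : ℤ, ((i, j') : ℤ × ℤ) ∈ MO n O J → ordKey n j' ≤ ordKey n j) :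
    wOJ n O J i = rMap n O i j := by
  have hM : ∀ p ∈ MO n O J, inP n p := fun p hp => hJ.1 p (MO_subset n O J hp)
  rw [rMap, wOJ, wOJ, Perm.mul_apply, Perm.mul_apply, MO_princ_eq_filter hJ hmem,
    wPerm_filter_ple_apply hM hmem hmax]

/-- For `J ∈ 𝒥ₖ` and `i ∈ [1,k]`, if `j` is the `⋖`-maximal element with
`(i,j) ∈ M_O(J)`, then `w^{O,J}(i) = r(i,j)`. -/
theorem stmt2 (n k : ℕ) (O J : Finset (ℤ × ℤ)) (hA : Aset n ⊆ O) (hO : O ⊆ Pfin n)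
    (hJ : IsIdeal n J) (hJk : (J ∩ Aset n).card = k)
    (i j : ℤ) (hi1 : 1 ≤ i) (hik : i ≤ (k : ℤ))
    (hmem : ((i, j) : ℤ × ℤ) ∈ MO n O J)
    (hmax : ∀ j' : ℤ, ((i, j') : ℤ × ℤ) ∈ MO n O J → ordKey n j' ≤ ordKey n j) :
    wOJ n O J i = rMap n O i j :=
  stmt2_general n O J hJ i j hmem hmax

end
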